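/- arXiv:1304.6111 — 4 statements merged into one kernel-verified Lean document; each statement's English description precedes it below -/
import Mathlib

section
/- Let G be a group and H, K subgroups of G. For elements a, b, c, d ∈ G, if aH ∩ Kb ≠ ∅, cH ∩ Kb ≠ ∅, and cH ∩ Kd ≠ ∅, then aH ∩ Kd ≠ ∅. -/
/-! `aH ∩ Kb` is nonempty exactly when `a` and `b` lie in the same `(K, H)`-double coset, so the
hypotheses chain `KaH = KbH = KcH = KdH`. -/

open DoubleCoset

section

variable {G : Type*} [Group G] {H K : Subgroup G} {a b : G}

theorem DoubleCoset.mem_doubleCoset_iff_doubleCoset_eq :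
    a ∈ doubleCoset b K H ↔ doubleCoset a K H = doubleCoset b K H :=
  ⟨doubleCoset_eq_of_mem, fun h => h ▸ mem_doubleCoset_self K H a⟩

theorem leftCoset_inter_rightCoset_nonempty_iff_mem_doubleCoset :
    ({x : G | ∃ h ∈ H, x = a * h} ∩ {x : G | ∃ k ∈ K, x = k * b}).Nonempty ↔
      a ∈ doubleCoset b K H := by
  rw [mem_doubleCoset]
  constructor
  · rintro ⟨_, ⟨h, hh, rfl⟩, k, hk, hx⟩
    exact ⟨k, hk, h⁻¹, H.inv_mem hh, eq_mul_inv_of_mul_eq hx⟩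
  · rintro ⟨k, hk, h, hh, rfl⟩
    exact ⟨k * b, ⟨h⁻¹, H.inv_mem hh, (mul_inv_cancel_right _ _).symm⟩, k, hk, rfl⟩

end

theorem coset_intersection_path_shortening {G : Type*} [Group G] (H K : Subgroup G)
    (a b c d : G)
    (hab : ({x : G | ∃ h ∈ H, x = a * h} ∩ {x : G | ∃ k ∈ K, x = k * b}).Nonempty)
    (hcb : ({x : G | ∃ h ∈ H, x = c * h} ∩ {x : G | ∃ k ∈ K, x = k * b}).Nonempty)
    (hcd : ({x : G | ∃ h ∈ H, x = c * h} ∩ {x : G | ∃ k ∈ K, x = k * d}).Nonempty) :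
    ({x : G | ∃ h ∈ H, x = a * h} ∩ {x : G | ∃ k ∈ K, x = k * d}).Nonempty := by
  simp only [leftCoset_inter_rightCoset_nonempty_iff_mem_doubleCoset,
    mem_doubleCoset_iff_doubleCoset_eq] at *
  exact hab.trans (hcb.symm.trans hcd)
end

section
/- Let G be a group and let H, K be subgroups of G of finite index with [G:H] ≤ [G:K]. Then there exists a set T ⊆ G that is a left transversal for H in G (contains exactly one element of each left coset of H) and such that distinct elements of T lie in distinct right cosets of K (so T can be extended to a right transversal for K in G). -/
/-!
Hall's marriage theorem, applied to the bipartite graph joining a left coset of `H` to every right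
coset of `K` that it meets. In a finite group, `n` left cosets of `H` consist of `n |H|` elements,
and these are covered by the right cosets of `K` they meet, each of size `|K| ≤ |H|`; so they meet
at least `n` of them, which is Hall's condition. The general case reduces to the finite quotient
`G ⧸ N`, where `N` is the normal core of `H ⊓ K`: both `H` and `K` are unions of cosets of `N`.
-/

open QuotientGroup Subgroup Pointwise

namespace Subgroup

variable {G Q : Type*} [Group G] [Group Q]

structure IsLeftTransversalSeparatingRightCosets (H K : Subgroup G) (T : Set G) : Prop where
  existsUnique_inv_mul_mem (g : G) : ∃! t : G, t ∈ T ∧ t⁻¹ * g ∈ H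
  eq_of_mul_inv_mem {a b : G} : a ∈ T → b ∈ T → a * b⁻¹ ∈ K → a = b

theorem natCard_preimage_mk (H : Subgroup G) (s : Set (G ⧸ H)) :
    Nat.card (QuotientGroup.mk ⁻¹' s : Set G) = Nat.card H * Nat.card s := by
  rw [Nat.card_congr (preimageMkEquivSubgroupProdSet H s), Nat.card_prod]

theorem card_le_card_of_index_le [Finite G] {H K : Subgroup G} (h : H.index ≤ K.index) :
    Nat.card K ≤ Nat.card H := by
  refine Nat.le_of_mul_le_mul_right ?_ (Nat.pos_of_ne_zero H.index_ne_zero_of_finite)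
  calc Nat.card K * H.index ≤ Nat.card K * K.index := Nat.mul_le_mul_left _ h
    _ = Nat.card H * H.index := by rw [card_mul_index, card_mul_index]

theorem card_le_card_image_inv_mk [Finite G] {H K : Subgroup G} (hHK : Nat.card K ≤ Nat.card H)
    (A : Set (G ⧸ H)) :
    Nat.card A ≤ Nat.card ((fun g : G => ((g⁻¹ : G) : G ⧸ K)) '' (QuotientGroup.mk ⁻¹' A)) := by
  set I := (fun g : G => ((g⁻¹ : G) : G ⧸ K)) '' (QuotientGroup.mk ⁻¹' A)
  have hsub : (QuotientGroup.mk ⁻¹' A : Set G) ⊆ (QuotientGroup.mk ⁻¹' I)⁻¹ :=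
    fun g hg => ⟨g, hg, rfl⟩
  have hcount : Nat.card H * Nat.card A ≤ Nat.card H * Nat.card I := calc
    Nat.card H * Nat.card A = Nat.card (QuotientGroup.mk ⁻¹' A : Set G) :=
      (natCard_preimage_mk H A).symm
    _ ≤ Nat.card ↥((QuotientGroup.mk ⁻¹' I : Set G)⁻¹) := Nat.card_mono (Set.toFinite _) hsub
    _ = Nat.card K * Nat.card I := by rw [Set.natCard_inv, natCard_preimage_mk]
    _ ≤ Nat.card H * Nat.card I := Nat.mul_le_mul_right _ hHK
  exact Nat.le_of_mul_le_mul_left hcount Nat.card_pos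

/-- Right cosets of `K` are encoded as left cosets through `K g ↦ g⁻¹ K`, so `q ↦ t q` matches each
left coset of `H` with a right coset of `K` that it meets, injectively. -/
theorem exists_section_injective_inv_mk [Finite G] {H K : Subgroup G}
    (hHK : Nat.card K ≤ Nat.card H) :
    ∃ t : G ⧸ H → G, (∀ q, (t q : G ⧸ H) = q) ∧
      Function.Injective (fun q => (((t q)⁻¹ : G) : G ⧸ K)) := by
  classical
  have := Fintype.ofFinite (G ⧸ K)
  let R : SetRel (G ⧸ H) (G ⧸ K) := Set.range fun g : G => ((g : G ⧸ H), ((g⁻¹ : G) : G ⧸ K))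
  have hall : ∀ A : Finset (G ⧸ H), A.card ≤ Fintype.card (R.image A) := by
    intro A
    rw [← Nat.card_eq_fintype_card]
    convert card_le_card_image_inv_mk hHK (A : Set (G ⧸ H)) using 1
    · simp
    · congr 2
      ext c
      simp [R, SetRel.image]
  obtain ⟨f, hf, hfR⟩ := (Fintype.all_card_le_rel_image_card_iff_exists_injective R).mp hall
  choose t ht using hfR
  simp only [Prod.mk.injEq] at ht
  refine ⟨t, fun q => (ht q).1, fun p q hpq => hf ?_⟩
  rwa [← (ht p).2, ← (ht q).2]

theorem isLeftTransversalSeparatingRightCosets_range {H K : Subgroup G} (t : G ⧸ H → G)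
    (ht : ∀ q, (t q : G ⧸ H) = q)
    (hinj : Function.Injective (fun q => (((t q)⁻¹ : G) : G ⧸ K))) :
    IsLeftTransversalSeparatingRightCosets H K (Set.range t) where
  existsUnique_inv_mul_mem g := by
    refine ⟨t g, ⟨⟨g, rfl⟩, QuotientGroup.eq.mp (ht g)⟩, ?_⟩
    rintro _ ⟨⟨q, rfl⟩, hq⟩
    rw [← ht q, QuotientGroup.eq.mpr hq]
  eq_of_mul_inv_mem := by
    rintro _ _ ⟨p, rfl⟩ ⟨q, rfl⟩ hpq
    refine congrArg t (hinj (QuotientGroup.eq.mpr ?_))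
    simpa using hpq

theorem IsLeftTransversalSeparatingRightCosets.image_surjInv {π : G →* Q}
    (hπ : Function.Surjective π) {H K : Subgroup Q} {T : Set Q}
    (hT : IsLeftTransversalSeparatingRightCosets H K T) :
    IsLeftTransversalSeparatingRightCosets (H.comap π) (K.comap π)
      (Function.surjInv hπ '' T) where
  existsUnique_inv_mul_mem g := by
    obtain ⟨t, ⟨htT, htg⟩, huniq⟩ := hT.existsUnique_inv_mul_mem (π g)
    refine ⟨Function.surjInv hπ t, ⟨⟨t, htT, rfl⟩, ?_⟩, ?_⟩
    · simpa [Function.surjInv_eq hπ] using htg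
    · rintro _ ⟨⟨u, huT, rfl⟩, hug⟩
      rw [huniq u ⟨huT, by simpa [Function.surjInv_eq hπ] using hug⟩]
  eq_of_mul_inv_mem := by
    rintro _ _ ⟨a, haT, rfl⟩ ⟨b, hbT, rfl⟩ hab
    rw [hT.eq_of_mul_inv_mem haT hbT (by simpa [Function.surjInv_eq hπ] using hab)]

end Subgroup

theorem exists_left_transversal_extendable_to_right {G : Type*} [Group G]
    (H K : Subgroup G) [H.FiniteIndex] [K.FiniteIndex]
    (hle : H.index ≤ K.index) :
    ∃ T : Set G,
      (∀ g : G, ∃! t : G, t ∈ T ∧ t⁻¹ * g ∈ H) ∧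
      (∀ a ∈ T, ∀ b ∈ T, a * b⁻¹ ∈ K → a = b) := by
  let N := (H ⊓ K).normalCore
  have hNH : (mk' N).ker ≤ H := by
    rw [ker_mk']; exact (normalCore_le _).trans inf_le_left
  have hNK : (mk' N).ker ≤ K := by
    rw [ker_mk']; exact (normalCore_le _).trans inf_le_right
  have hcard : Nat.card (K.map (mk' N)) ≤ Nat.card (H.map (mk' N)) := by
    apply card_le_card_of_index_le
    rwa [index_map_eq _ (mk'_surjective N) hNH, index_map_eq _ (mk'_surjective N) hNK]
  obtain ⟨t, ht, hinj⟩ := exists_section_injective_inv_mk hcard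
  have hT := (isLeftTransversalSeparatingRightCosets_range t ht hinj).image_surjInv
    (mk'_surjective N)
  rw [comap_map_eq_self hNH, comap_map_eq_self hNK] at hT
  exact ⟨_, hT.existsUnique_inv_mul_mem, fun a ha b hb => hT.eq_of_mul_inv_mem ha hb⟩
end

section
/- Let G be a group and H a subgroup of G of finite index. Then there exists a set T ⊆ G that is simultaneously a left transversal and a right transversal for H in G (a left-right transversal). -/
/-!
Let `G` act on `X = G ⧸ H`, where `H` is the stabilizer of the base point `a = H`. The suborbit
(`H`-orbit) of `g • a` is paired with that of `g⁻¹ • a`, and paired suborbits have equal size: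
they are `[H : H ∩ gHg⁻¹]` and `[H : H ∩ g⁻¹Hg]`, conjugation by `g` turns the second into
`[gHg⁻¹ : gHg⁻¹ ∩ H]`, and two subgroups `K`, `L` of the same finite index satisfy
`[K : K ∩ L] = [L : K ∩ L]`. So some permutation `σ` of `X` maps every suborbit onto its paired
one, and then each coset `x` contains an element `g` with `g⁻¹H = σ x`. Such elements form a left
transversal whose set of inverses is again a left transversal, i.e. a right transversal.
-/

open MulAction Function Set

theorem Subgroup.relIndex_comm_of_index_eq {G : Type*} [Group G] {H K : Subgroup G}
    [hH : H.FiniteIndex] (h : H.index = K.index) : K.relIndex H = H.relIndex K := by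
  refine Nat.eq_of_mul_eq_mul_right (Nat.pos_of_ne_zero hH.index_ne_zero) ?_
  calc K.relIndex H * H.index = (K ⊓ H).index := by
        rw [← inf_relIndex_right, relIndex_mul_index inf_le_right]
    _ = H.relIndex K * K.index := by
        rw [inf_comm, ← inf_relIndex_right, relIndex_mul_index inf_le_right]
    _ = H.relIndex K * H.index := by rw [h]

namespace MulAction

variable {G X : Type*} [Group G] [MulAction G X]

theorem ncard_orbit_subgroup_eq_relIndex (S : Subgroup G) (x : X) :
    (orbit S x).ncard = (stabilizer G x).relIndex S := by
  rw [← index_stabilizer]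
  rfl

theorem ncard_orbit_stabilizer_inv_smul [IsPretransitive G X] [Finite X] (a : X) (g : G) :
    (orbit (stabilizer G a) (g⁻¹ • a)).ncard = (orbit (stabilizer G a) (g • a)).ncard := by
  have : (stabilizer G a).FiniteIndex :=
    ⟨by rw [index_stabilizer_of_transitive]; exact (Nat.card_pos_iff.2 ⟨⟨a⟩, ‹_›⟩).ne'⟩
  let c := (MulAut.conj g).toMonoidHom
  have hconj : stabilizer G a = (stabilizer G (g⁻¹ • a)).map c := by
    rw [← stabilizer_smul_eq_stabilizer_map_conj, smul_inv_smul]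
  rw [ncard_orbit_subgroup_eq_relIndex, ncard_orbit_subgroup_eq_relIndex]
  calc (stabilizer G (g⁻¹ • a)).relIndex (stabilizer G a)
      = ((stabilizer G (g⁻¹ • a)).map c).relIndex ((stabilizer G a).map c) :=
        (Subgroup.relIndex_map_map_of_injective _ _ (MulAut.conj g).injective).symm
    _ = (stabilizer G a).relIndex (stabilizer G (g • a)) := by
        rw [← hconj, ← stabilizer_smul_eq_stabilizer_map_conj]
    _ = (stabilizer G (g • a)).relIndex (stabilizer G a) :=
        (Subgroup.relIndex_comm_of_index_eq
          (by rw [index_stabilizer_of_transitive, index_stabilizer_of_transitive])).symm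

theorem mk_inv_smul_eq_of_smul_eq {a : X} {g h : G} (hgh : g • a = h • a) :
    (Quotient.mk'' (g⁻¹ • a) : orbitRel.Quotient (stabilizer G a) X) =
      Quotient.mk'' (h⁻¹ • a) := by
  refine Quotient.sound' ⟨⟨g⁻¹ * h, ?_⟩, ?_⟩
  · rw [mem_stabilizer_iff, mul_smul, ← hgh, inv_smul_smul]
  · show (g⁻¹ * h) • h⁻¹ • a = g⁻¹ • a
    rw [mul_smul, smul_inv_smul]

theorem mk_smul_of_mk_inv_smul_eq {a : X} {g h : G}
    (hgh : (Quotient.mk'' (g⁻¹ • a) : orbitRel.Quotient (stabilizer G a) X) =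
      Quotient.mk'' (h • a)) :
    (Quotient.mk'' (g • a) : orbitRel.Quotient (stabilizer G a) X) = Quotient.mk'' (h⁻¹ • a) := by
  obtain ⟨⟨s, hs⟩, hsh⟩ := Quotient.exact' hgh
  change s • h • a = g⁻¹ • a at hsh
  refine Quotient.sound' ⟨⟨g * s * h, ?_⟩, ?_⟩
  · rw [mem_stabilizer_iff, mul_smul, mul_smul, hsh, smul_inv_smul]
  · show (g * s * h) • h⁻¹ • a = g • a
    rw [mul_smul, smul_inv_smul, mul_smul, mem_stabilizer_iff.mp hs]

theorem card_fiber_mk (S : Subgroup G) (y : X) :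
    Nat.card {x // (Quotient.mk'' x : orbitRel.Quotient S X) = Quotient.mk'' y} =
      (orbit S y).ncard :=
  Nat.card_congr (Equiv.subtypeEquivRight fun _ => Quotient.eq'')

variable [IsPretransitive G X]

variable (G) in
noncomputable def pairedSuborbit (a x : X) : orbitRel.Quotient (stabilizer G a) X :=
  Quotient.mk'' ((exists_smul_eq G a x).choose⁻¹ • a)

theorem pairedSuborbit_smul (a : X) (g : G) :
    pairedSuborbit G a (g • a) = Quotient.mk'' (g⁻¹ • a) :=
  mk_inv_smul_eq_of_smul_eq (exists_smul_eq G a (g • a)).choose_spec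

theorem pairedSuborbit_eq_mk_iff (a x y : X) :
    pairedSuborbit G a x = Quotient.mk'' y ↔ Quotient.mk'' x = pairedSuborbit G a y := by
  obtain ⟨g, rfl⟩ := exists_smul_eq G a x
  obtain ⟨h, rfl⟩ := exists_smul_eq G a y
  rw [pairedSuborbit_smul, pairedSuborbit_smul]
  refine ⟨mk_smul_of_mk_inv_smul_eq, fun hgh => ?_⟩
  simpa using mk_smul_of_mk_inv_smul_eq (a := a) (g := g⁻¹) (h := h⁻¹) (by rwa [inv_inv])

theorem card_fiber_pairedSuborbit [Finite X] (a : X) (c : orbitRel.Quotient (stabilizer G a) X) :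
    Nat.card {x // pairedSuborbit G a x = c} = Nat.card {x // Quotient.mk'' x = c} := by
  induction c using Quotient.inductionOn' with | h y => ?_
  obtain ⟨g, rfl⟩ := exists_smul_eq G a y
  simp_rw [pairedSuborbit_eq_mk_iff, pairedSuborbit_smul, card_fiber_mk]
  exact ncard_orbit_stabilizer_inv_smul a g

theorem exists_equiv_forall_exists_smul_eq_and_inv_smul_eq [Finite X] (a : X) :
    ∃ σ : X ≃ X, ∀ x, ∃ g : G, g • a = x ∧ g⁻¹ • a = σ x := by
  have hfiber (c : orbitRel.Quotient (stabilizer G a) X) :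
      Nonempty ({x // Quotient.mk'' x = c} ≃ {x // pairedSuborbit G a x = c}) :=
    Finite.card_eq.mp (card_fiber_pairedSuborbit a c).symm
  refine ⟨Equiv.ofFiberEquiv fun c => (hfiber c).some, fun x => ?_⟩
  have hσ := Equiv.ofFiberEquiv_map (fun c => (hfiber c).some) x
  rw [pairedSuborbit_eq_mk_iff] at hσ
  obtain ⟨g, rfl⟩ := exists_smul_eq G a x
  obtain ⟨⟨s, hs⟩, hsg⟩ := Quotient.exact' (hσ.trans (pairedSuborbit_smul a g))
  change s • g⁻¹ • a = _ at hsg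
  refine ⟨g * s⁻¹, ?_, ?_⟩
  · rw [mul_smul, inv_smul_eq_iff.mpr (mem_stabilizer_iff.mp hs).symm]
  · rw [mul_inv_rev, inv_inv, mul_smul, hsg]

end MulAction

theorem Function.Injective.existsUnique_mem_range_and {α β : Type*} {t : α → β}
    (ht : Injective t) {p : β → Prop} : (∃! y, y ∈ range t ∧ p y) ↔ ∃! a, p (t a) := by
  constructor
  · rintro ⟨_, ⟨⟨a, rfl⟩, ha⟩, huniq⟩
    exact ⟨a, ha, fun b hb => ht (huniq _ ⟨⟨b, rfl⟩, hb⟩)⟩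
  · rintro ⟨a, ha, huniq⟩
    refine ⟨t a, ⟨⟨a, rfl⟩, ha⟩, ?_⟩
    rintro _ ⟨⟨b, rfl⟩, hb⟩
    rw [huniq b hb]

theorem exists_left_right_transversal_of_finiteIndex {G : Type*} [Group G]
    (H : Subgroup G) [H.FiniteIndex] :
    ∃ T : Set G,
      (∀ g : G, ∃! t : G, t ∈ T ∧ t⁻¹ * g ∈ H) ∧
      (∀ g : G, ∃! t : G, t ∈ T ∧ g * t⁻¹ ∈ H) := by
  obtain ⟨σ, hσ⟩ := exists_equiv_forall_exists_smul_eq_and_inv_smul_eq (G := G) ((1 : G) : G ⧸ H)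
  choose t ht ht_inv using hσ
  simp only [MulAction.Quotient.smul_coe, smul_eq_mul, mul_one] at ht ht_inv
  have t_inj : Injective t := fun p q hpq => by rw [← ht p, ← ht q, hpq]
  refine ⟨range t, fun g => ?_, fun g => ?_⟩
  · simp_rw [t_inj.existsUnique_mem_range_and, ← QuotientGroup.eq, ht]
    exact existsUnique_eq
  · have hmem (x : G) : g * x⁻¹ ∈ H ↔ ((x⁻¹ : G) : G ⧸ H) = ((g⁻¹ : G) : G ⧸ H) := by
      rw [QuotientGroup.eq, inv_inv, ← inv_mem_iff, mul_inv_rev, inv_inv]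
    simp_rw [t_inj.existsUnique_mem_range_and, hmem, ht_inv]
    exact σ.bijective.existsUnique _
end

section
/- Let G be a finite group and H a subgroup of G. Then there exists a set T ⊆ G that is simultaneously a left transversal and a right transversal for H in G. -/
/-!
The left cosets and the right cosets of `H` are two partitions of `G` into blocks of the same
size `|H|`. For any two such partitions, a union of `k` blocks of the first one has `k |H|`
elements and so meets at least `k` blocks of the second one. Hall's marriage theorem then matches
every left coset injectively, hence bijectively, with a right coset that it meets, and picking
a point in each of these intersections gives a common transversal.
-/

open Finset

section CommonTransversal

variable {α ι κ : Type*}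

theorem card_le_card_biUnion_image_fiber [Fintype α] [DecidableEq ι] [DecidableEq κ]
    {p : α → ι} {q : α → κ} {n : ℕ} (hn : 0 < n)
    (hp : ∀ i, n ≤ #{a | p a = i}) (hq : ∀ j, #{a | q a = j} ≤ n) (A : Finset ι) :
    #A ≤ #(A.biUnion fun i ↦ image q {a | p a = i}) := by
  set s : Finset α := {a | p a ∈ A}
  have hs : #A * n ≤ #s := by
    rw [card_eq_sum_card_fiberwise (s := s) (t := A) fun a ha ↦ (mem_filter.1 ha).2,
      ← smul_eq_mul]
    refine card_nsmul_le_sum _ _ _ fun i hi ↦ (hp i).trans_eq ?_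
    congr 1
    ext a
    simp only [s, mem_filter, mem_univ, true_and, iff_and_self]
    rintro rfl
    exact hi
  have hsq : #s ≤ n * #(s.image q) :=
    card_le_mul_card_image s n fun j _ ↦
      (card_le_card (filter_subset_filter _ (subset_univ s))).trans (hq j)
  have himage : s.image q ⊆ A.biUnion fun i ↦ image q {a | p a = i} := by
    intro j hj
    obtain ⟨a, ha, rfl⟩ := mem_image.1 hj
    exact mem_biUnion.2 ⟨p a, (mem_filter.1 ha).2, mem_image_of_mem q (by simp)⟩
  refine Nat.le_of_mul_le_mul_right ?_ hn
  calc #A * n ≤ #s := hs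
    _ ≤ n * #(s.image q) := hsq
    _ ≤ n * #(A.biUnion fun i ↦ image q {a | p a = i}) :=
      Nat.mul_le_mul_left n (card_le_card himage)
    _ = #(A.biUnion fun i ↦ image q {a | p a = i}) * n := mul_comm _ _

theorem Nat.card_preimage_singleton_eq_card_filter [Fintype α] [DecidableEq ι] (p : α → ι)
    (i : ι) : Nat.card (p ⁻¹' {i}) = #{a | p a = i} := by
  rw [← Fintype.card_subtype, ← Nat.card_eq_fintype_card]
  rfl

theorem Fintype.card_eq_card_mul_of_card_fiber [Fintype α] [Fintype ι] [DecidableEq ι]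
    {p : α → ι} {n : ℕ} (hp : ∀ i, #{a | p a = i} = n) :
    Fintype.card α = Fintype.card ι * n := by
  rw [← card_univ, card_eq_sum_card_fiberwise fun a _ ↦ mem_univ (p a)]
  simp [hp]

theorem exists_common_transversal [Finite α] [Finite ι] [Finite κ] {p : α → ι} {q : α → κ}
    {n : ℕ} (hn : 0 < n) (hp : ∀ i, Nat.card (p ⁻¹' {i}) = n)
    (hq : ∀ j, Nat.card (q ⁻¹' {j}) = n) :
    ∃ T : Set α, (∀ i, ∃! a, a ∈ T ∧ p a = i) ∧ (∀ j, ∃! a, a ∈ T ∧ q a = j) := by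
  classical
  cases nonempty_fintype α
  cases nonempty_fintype ι
  cases nonempty_fintype κ
  simp only [Nat.card_preimage_singleton_eq_card_filter] at hp hq
  obtain ⟨f, hf_inj, hf⟩ :=
    (all_card_le_biUnion_card_iff_exists_injective _).1
      (card_le_card_biUnion_image_fiber hn (hp · |>.ge) (hq · |>.le))
  have hf_bij : f.Bijective :=
    (Fintype.bijective_iff_injective_and_card f).2 ⟨hf_inj, Nat.eq_of_mul_eq_mul_right hn <|
      (Fintype.card_eq_card_mul_of_card_fiber hp).symm.trans
        (Fintype.card_eq_card_mul_of_card_fiber hq)⟩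
  choose s hs_p hs_q using fun i ↦ by simpa using hf i
  refine ⟨Set.range s, fun i ↦ ⟨s i, ⟨⟨i, rfl⟩, hs_p i⟩, ?_⟩, fun j ↦ ?_⟩
  · rintro _ ⟨⟨i', rfl⟩, rfl⟩
    rw [hs_p]
  · obtain ⟨i, rfl⟩ := hf_bij.2 j
    refine ⟨s i, ⟨⟨i, rfl⟩, hs_q i⟩, ?_⟩
    rintro _ ⟨⟨i', rfl⟩, h⟩
    rw [hf_inj ((hs_q i').symm.trans h)]

end CommonTransversal

namespace QuotientGroup

variable {G : Type*} [Group G] (H : Subgroup G)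

theorem card_preimage_mk_singleton (q : G ⧸ H) : Nat.card (mk ⁻¹' {q}) = Nat.card H := by
  simpa using card_preimage_mk H {q}

theorem card_preimage_rightRel_mk_singleton (q : Quotient (rightRel H)) :
    Nat.card ((Quotient.mk'' : G → Quotient (rightRel H)) ⁻¹' {q}) = Nat.card H := by
  rw [← card_preimage_mk_singleton H (quotientRightRelEquivQuotientLeftRel H q)]
  refine Nat.card_congr ((Equiv.inv G).subtypeEquiv fun a ↦ ?_)
  exact (quotientRightRelEquivQuotientLeftRel H).apply_eq_iff_eq.symm

end QuotientGroup

theorem exists_left_right_transversal_of_finite {G : Type*} [Group G] [Finite G]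
    (H : Subgroup G) :
    ∃ T : Set G,
      (∀ g : G, ∃! t : G, t ∈ T ∧ t⁻¹ * g ∈ H) ∧
      (∀ g : G, ∃! t : G, t ∈ T ∧ g * t⁻¹ ∈ H) := by
  obtain ⟨T, hT_left, hT_right⟩ := exists_common_transversal Nat.card_pos
    (QuotientGroup.card_preimage_mk_singleton H)
    (QuotientGroup.card_preimage_rightRel_mk_singleton H)
  refine ⟨T, fun g ↦ ?_, fun g ↦ ?_⟩
  · simpa only [QuotientGroup.eq] using hT_left g
  · simpa only [Quotient.eq'', QuotientGroup.rightRel_apply] using hT_right (Quotient.mk'' g)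
end
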